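/- Dictatorial preequalization: For every index i : Fin n: (a) Q * (Matrix.updateCol L i 𝟙) equals the matrix whose (r, c) entry is 1 if c = i and 0 otherwise; (b) for every ξ : ℝ, Q * (Matrix.updateCol L i (fun k => L k i + ξ)) equals the matrix whose (r, c) entry is ξ if c = i and 0 otherwise. Consequently, preequalizing an initial vector x by L⁽ⁱ⁾ (respectively M⁽ⁱ⁾_ξ) and then iterating P brings every agent's opinion to x i (respectively ξ · x i). -/

import Mathlib

/-!
Writing `P ^ (k + 1) = P ^ k * P` and passing to the limit gives `Q * P = Q`, i.e. `Q * L = 0`;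
likewise `P ^ k *ᵥ 𝟙 = 𝟙` gives `Q *ᵥ 𝟙 = 𝟙`. Hence `Q` times `L` with its `i`-th column replaced
by `c` is the zero matrix with `i`-th column `Q *ᵥ c`, which is `𝟙` for `c = 𝟙` and `ξ • 𝟙` for
`c = L *ᵥ eᵢ + ξ • 𝟙`.
-/

open Filter Matrix Topology

theorem mul_eq_self_of_tendsto_pow {M : Type*} [Monoid M] [TopologicalSpace M] [ContinuousMul M]
    [T2Space M] {a q : M} (h : Tendsto (a ^ ·) atTop (𝓝 q)) : q * a = q :=
  have hmul : Tendsto (fun k => a ^ k * a) atTop (𝓝 (q * a)) := h.mul_const a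
  have hsucc : Tendsto (fun k => a ^ (k + 1)) atTop (𝓝 q) := h.comp (tendsto_add_atTop_nat 1)
  tendsto_nhds_unique hmul (by simpa only [pow_succ] using hsucc)

namespace Matrix

variable {n R : Type*} [DecidableEq n]

theorem of_ite_eq_updateCol_zero [Zero R] (i : n) (a : R) :
    of (fun _ c => if c = i then a else 0) = updateCol (0 : Matrix n n R) i (fun _ => a) := by
  ext r c
  simp [updateCol_apply]

variable [Fintype n]

theorem pow_mulVec_eq_self [Semiring R] {P : Matrix n n R} {v : n → R} (hv : P *ᵥ v = v) :
    ∀ k : ℕ, (P ^ k) *ᵥ v = v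
  | 0 => by rw [pow_zero, one_mulVec]
  | k + 1 => by rw [pow_succ, ← mulVec_mulVec, hv, pow_mulVec_eq_self hv k]

theorem mulVec_eq_self_of_tendsto_pow [Semiring R] [TopologicalSpace R] [IsTopologicalSemiring R]
    [T2Space R] {P Q : Matrix n n R} {v : n → R} (hv : P *ᵥ v = v)
    (h : Tendsto (P ^ ·) atTop (𝓝 Q)) : Q *ᵥ v = v :=
  (isClosed_eq (continuous_id.matrix_mulVec continuous_const) continuous_const).mem_of_tendsto h
    (Eventually.of_forall (pow_mulVec_eq_self hv))

theorem updateCol_zero_const_mulVec [NonUnitalNonAssocSemiring R] (i : n) (a : R) (x : n → R) :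
    updateCol (0 : Matrix n n R) i (fun _ => a) *ᵥ x = fun _ => a * x i := by
  ext r
  simp [mulVec, dotProduct, updateCol_apply]

end Matrix

theorem dictatorial_preequalization_general
    (n : ℕ) (P Q : Matrix (Fin n) (Fin n) ℝ)
    (hProw : ∀ i, ∑ j, P i j = 1)
    (hconv : Tendsto (fun k => P ^ k) atTop (nhds Q)) (i : Fin n) :
    Q * Matrix.updateCol (1 - P) i (fun _ => (1 : ℝ)) =
      Matrix.of (fun _ c => if c = i then (1 : ℝ) else 0) ∧
    (∀ ξ : ℝ,
      Q * Matrix.updateCol (1 - P) i (fun k => (1 - P) k i + ξ) =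
        Matrix.of (fun _ c => if c = i then ξ else 0)) ∧
    (∀ (x : Fin n → ℝ) (r : Fin n),
      (Q * Matrix.updateCol (1 - P) i (fun _ => (1 : ℝ))).mulVec x r = x i) ∧
    (∀ (ξ : ℝ) (x : Fin n → ℝ) (r : Fin n),
      (Q * Matrix.updateCol (1 - P) i (fun k => (1 - P) k i + ξ)).mulVec x r
        = ξ * x i) := by
  have hQL : Q * (1 - P) = 0 := by
    rw [mul_sub, mul_one, mul_eq_self_of_tendsto_pow hconv, sub_self]
  have hP1 : P *ᵥ (fun _ => 1) = fun _ => 1 := by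
    ext r
    simpa [mulVec, dotProduct] using hProw r
  have hQ1 : Q *ᵥ (fun _ => 1) = fun _ => 1 := mulVec_eq_self_of_tendsto_pow hP1 hconv
  have hA : Q * updateCol (1 - P) i (fun _ => 1) = updateCol 0 i (fun _ => 1) := by
    rw [mul_updateCol, hQL, hQ1]
  have hB (ξ : ℝ) : Q * updateCol (1 - P) i (fun k => (1 - P) k i + ξ) =
      updateCol 0 i (fun _ => ξ) := by
    have hcol : (fun k => (1 - P) k i + ξ) = (1 - P) *ᵥ Pi.single i 1 + ξ • fun _ => 1 := by
      ext k
      simp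
    rw [mul_updateCol, hQL, hcol, mulVec_add, mulVec_mulVec, hQL, zero_mulVec, mulVec_smul, hQ1,
      zero_add]
    simp only [Pi.smul_def, smul_eq_mul, mul_one]
  refine ⟨?_, fun ξ => ?_, fun x r => ?_, fun ξ x r => ?_⟩ <;>
    simp only [hA, hB, of_ite_eq_updateCol_zero, updateCol_zero_const_mulVec, one_mul]

/-- Dictatorial preequalization: `Q * L⁽ⁱ⁾` is the 0-1 matrix whose `i`-th
column is all ones, `Q * M⁽ⁱ⁾_ξ` is the matrix whose `i`-th column is all `ξ`,
and the corresponding two-stage procedures bring every opinion to `x i`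
(resp. `ξ * x i`). -/
theorem dictatorial_preequalization
    (n : ℕ) (hn : 0 < n) (P Q : Matrix (Fin n) (Fin n) ℝ)
    (hPnonneg : ∀ i j, 0 ≤ P i j) (hProw : ∀ i, ∑ j, P i j = 1)
    (hconv : Tendsto (fun k => P ^ k) atTop (nhds Q)) (i : Fin n) :
    Q * Matrix.updateCol (1 - P) i (fun _ => (1 : ℝ)) =
      Matrix.of (fun _ c => if c = i then (1 : ℝ) else 0) ∧
    (∀ ξ : ℝ,
      Q * Matrix.updateCol (1 - P) i (fun k => (1 - P) k i + ξ) =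
        Matrix.of (fun _ c => if c = i then ξ else 0)) ∧
    (∀ (x : Fin n → ℝ) (r : Fin n),
      (Q * Matrix.updateCol (1 - P) i (fun _ => (1 : ℝ))).mulVec x r = x i) ∧
    (∀ (ξ : ℝ) (x : Fin n → ℝ) (r : Fin n),
      (Q * Matrix.updateCol (1 - P) i (fun k => (1 - P) k i + ξ)).mulVec x r
        = ξ * x i) :=
  dictatorial_preequalization_general n P Q hProw hconv i
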